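/- Soundness of the typing system: if the judgement Π ⊢ G : ⟨φ,Λ⟩ is derivable for a ground g-choreography G, then ⟦G⟧ ≠ ⊥ (G is well-formed), Π = P(G), and for every participant A ∈ Π, φ̂(A) equals the set of labels of the minimal events of the projection ⟦G⟧↾A and Λ̂(A) equals the set of labels of the maximal events of ⟦G⟧↾A. -/

import Mathlib

open scoped Classical

namespace Choreo

/-! ## Labels -/

/-- Communication labels: output `A B!m` and input `A B?m`. -/
inductive Label (P M : Type) where
  | out : P → P → M → Label P M
  | inp : P → P → M → Label P M

variable {P M : Type}

/-- The subject of a label: the sender of an output, the receiver of an input. -/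
def Label.sbj : Label P M → P
  | .out a _ _ => a
  | .inp _ b _ => b

/-- The set `L^!` of output labels (sender and receiver distinct). -/
def Lout : Set (Label P M) := {l | ∃ a b m, a ≠ b ∧ l = .out a b m}

/-- The set `L^?` of input labels (sender and receiver distinct). -/
def Lin : Set (Label P M) := {l | ∃ a b m, a ≠ b ∧ l = .inp a b m}

/-- `L̂(A)`: the labels in `L` whose subject is `A`. -/
def hat (L : Set (Label P M)) (A : P) : Set (Label P M) := {l ∈ L | l.sbj = A}

/-- `sbj(L)`: the set of subjects of the labels in `L`. -/
def sbjSet (L : Set (Label P M)) : Set P := Label.sbj '' L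

/-- `L − Π`: the labels in `L` whose subject is not in `Π`. -/
def lminus (L : Set (Label P M)) (Γ : Set P) : Set (Label P M) := {l ∈ L | l.sbj ∉ Γ}

/-! ## Labelled event structures (events drawn from ℕ) -/

/-- Data of a labelled (prime) event structure over events drawn from `ℕ`. -/
structure ES (P M : Type) where
  ev : Set ℕ
  le : ℕ → ℕ → Prop
  conf : ℕ → ℕ → Prop
  lbl : ℕ → Label P M

namespace ES

variable (E : ES P M)

/-- Configurations: downward-closed conflict-free sets of events. -/
def Config (x : Set ℕ) : Prop :=
  x ⊆ E.ev ∧ (∀ e ∈ x, ∀ f ∈ E.ev, E.le f e → f ∈ x) ∧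
    ∀ e ∈ x, ∀ f ∈ x, ¬ E.conf e f

/-- `MaxC E`: the ⊆-maximal configurations of `E`. -/
def MaxC : Set (Set ℕ) := {x | E.Config x ∧ ∀ y, E.Config y → x ⊆ y → y = x}

/-- Minimal events of `s ⊆ E.ev` with respect to `E.le`. -/
def minIn (s : Set ℕ) : Set ℕ := {e ∈ s | ∀ f ∈ s, E.le f e → f = e}

/-- Maximal events of `s ⊆ E.ev` with respect to `E.le`. -/
def maxIn (s : Set ℕ) : Set ℕ := {e ∈ s | ∀ f ∈ s, E.le e f → f = e}

def minEv : Set ℕ := E.minIn E.ev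
def maxEv : Set ℕ := E.maxIn E.ev

/-- Labels of the minimal events of `E`. -/
def minLbl : Set (Label P M) := E.lbl '' E.minEv

/-- Labels of the maximal events of `E`. -/
def maxLbl : Set (Label P M) := E.lbl '' E.maxEv

/-- All labels occurring in `E`. -/
def lblSet : Set (Label P M) := E.lbl '' E.ev

/-- The projection `E↾A`: the restriction of `E` to the events whose label has subject `A`. -/
def proj (A : P) : ES P M where
  ev := {e ∈ E.ev | (E.lbl e).sbj = A}
  le u v := E.le u v ∧ (u ∈ E.ev ∧ (E.lbl u).sbj = A) ∧ (v ∈ E.ev ∧ (E.lbl v).sbj = A)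
  conf u v := E.conf u v ∧ (u ∈ E.ev ∧ (E.lbl u).sbj = A) ∧ (v ∈ E.ev ∧ (E.lbl v).sbj = A)
  lbl := E.lbl

/-- The projection `x↾A` of a configuration (as a set of events of `E`). -/
def projC (x : Set ℕ) (A : P) : Set ℕ := {e ∈ x | (E.lbl e).sbj = A}

end ES

/-! ## Constructions on event structures -/

/-- Tag for the events of a left component. -/
def tagL (e : ℕ) : ℕ := Nat.pair 0 e
/-- Tag for the events of a right component. -/
def tagR (e : ℕ) : ℕ := Nat.pair 1 e
/-- Tag for the events of the copy of the second component indexed by (the code of) a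
maximal configuration of the first one. -/
def tagC (k e : ℕ) : ℕ := Nat.pair 1 (Nat.pair k e)

/-- A code (injective on finite sets) of sets of naturals. -/
noncomputable def encSet (x : Set ℕ) : ℕ :=
  if h : x.Finite then h.toFinset.sum (fun n => 2 ^ n) else 0

/-- The empty event structure `ε`. -/
noncomputable def esEmpty [Nonempty P] [Nonempty M] : ES P M where
  ev := ∅
  le _ _ := False
  conf _ _ := False
  lbl _ := Label.out Classical.ofNonempty Classical.ofNonempty Classical.ofNonempty

/-- `⟦A→B:m⟧`: two ordered events labelled `A B!m < A B?m`. -/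
def esAct (a b : P) (m : M) : ES P M where
  ev := {0, 1}
  le u v := (u = 0 ∧ v = 0) ∨ (u = 0 ∧ v = 1) ∨ (u = 1 ∧ v = 1)
  conf _ _ := False
  lbl e := if e = 0 then Label.out a b m else Label.inp a b m

/-- Tensor product `E1 ⊗ E2` (componentwise disjoint union). -/
def esTensor (E1 E2 : ES P M) : ES P M where
  ev := (tagL '' E1.ev) ∪ (tagR '' E2.ev)
  le u v := (∃ e ∈ E1.ev, ∃ f ∈ E1.ev, E1.le e f ∧ u = tagL e ∧ v = tagL f) ∨
            (∃ e ∈ E2.ev, ∃ f ∈ E2.ev, E2.le e f ∧ u = tagR e ∧ v = tagR f)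
  conf u v := (∃ e ∈ E1.ev, ∃ f ∈ E1.ev, E1.conf e f ∧ u = tagL e ∧ v = tagL f) ∨
              (∃ e ∈ E2.ev, ∃ f ∈ E2.ev, E2.conf e f ∧ u = tagR e ∧ v = tagR f)
  lbl u := if (Nat.unpair u).1 = 0 then E1.lbl (Nat.unpair u).2 else E2.lbl (Nat.unpair u).2

/-- Sum `E1 + E2`: disjoint union with all cross pairs of events in conflict. -/
def esSum (E1 E2 : ES P M) : ES P M :=
  { esTensor E1 E2 with
    conf := fun u v => (esTensor E1 E2).conf u v ∨
      (∃ e ∈ E1.ev, ∃ f ∈ E2.ev, (u = tagL e ∧ v = tagR f) ∨ (u = tagR f ∧ v = tagL e)) }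

/-- Sequential composition: appends to each maximal configuration `x` of `E1` a disjoint
copy of `E2`, ordering an event of `x` below an event of the copy whenever their labels
have the same subject. -/
noncomputable def esSeq (E1 E2 : ES P M) : ES P M where
  ev := (tagL '' E1.ev) ∪ {u | ∃ x ∈ E1.MaxC, ∃ e ∈ E2.ev, u = tagC (encSet x) e}
  le u v :=
    (∃ e ∈ E1.ev, ∃ f ∈ E1.ev, E1.le e f ∧ u = tagL e ∧ v = tagL f) ∨
    (∃ x ∈ E1.MaxC, ∃ e ∈ E2.ev, ∃ f ∈ E2.ev, E2.le e f ∧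
       u = tagC (encSet x) e ∧ v = tagC (encSet x) f) ∨
    (∃ x ∈ E1.MaxC, ∃ e ∈ x, ∃ f ∈ E2.ev, (E1.lbl e).sbj = (E2.lbl f).sbj ∧
       u = tagL e ∧ v = tagC (encSet x) f)
  conf u v :=
    (∃ e ∈ E1.ev, ∃ f ∈ E1.ev, E1.conf e f ∧ u = tagL e ∧ v = tagL f) ∨
    (∃ x ∈ E1.MaxC, ∃ e ∈ E2.ev, ∃ f ∈ E2.ev, E2.conf e f ∧
       u = tagC (encSet x) e ∧ v = tagC (encSet x) f) ∨
    (∃ x ∈ E1.MaxC, ∃ x' ∈ E1.MaxC, x ≠ x' ∧ ∃ e ∈ E2.ev, ∃ f ∈ E2.ev,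
       u = tagC (encSet x) e ∧ v = tagC (encSet x') f) ∨
    (∃ x ∈ E1.MaxC, ∃ e ∈ E1.ev, (∃ e' ∈ x, E1.conf e e') ∧ ∃ f ∈ E2.ev,
       ((u = tagL e ∧ v = tagC (encSet x) f) ∨ (u = tagC (encSet x) f ∧ v = tagL e)))
  lbl u := if (Nat.unpair u).1 = 0 then E1.lbl (Nat.unpair u).2
           else E2.lbl (Nat.unpair (Nat.unpair u).2).2

/-! ## Well-branchedness -/

/-- Labels of the minimal events of the projection `E↾A`. -/
def minLblP (E : ES P M) (A : P) : Set (Label P M) := (E.proj A).minLbl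

/-- `A` is active for the branches `E1`, `E2`. -/
def active (E1 E2 : ES P M) (A : P) : Prop :=
  minLblP E1 A ≠ ∅ ∧ minLblP E2 A ≠ ∅ ∧
  Disjoint (minLblP E1 A) (minLblP E2 A) ∧
  minLblP E1 A ∪ minLblP E2 A ⊆ Lout

/-- `B` is passive for the branches `E1`, `E2`. -/
def passive (E1 E2 : ES P M) (B : P) : Prop :=
  Disjoint (minLblP E1 B) (minLblP E2 B) ∧
  minLblP E1 B ∪ minLblP E2 B ⊆ Lin ∧
  (minLblP E1 B = ∅ ↔ minLblP E2 B = ∅)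

/-- Well-branchedness: a unique active participant, all other participants passive. -/
def wb (E1 E2 : ES P M) : Prop :=
  ∃ A, active E1 E2 A ∧ (∀ A', active E1 E2 A' → A' = A) ∧
    ∀ B, B ≠ A → passive E1 E2 B

/-! ## Ground g-choreographies and their semantics -/

/-- Ground g-choreographies: `G ::= 0 | A→B:m | G;G | G|G | G+G`. -/
inductive GC (P M : Type) where
  | nil : GC P M
  | act : P → P → M → GC P M
  | seq : GC P M → GC P M → GC P M
  | par : GC P M → GC P M → GC P M
  | cho : GC P M → GC P M → GC P M

/-- `P(G)`: the participants occurring in `G`. -/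
def parts : GC P M → Set P
  | .nil => ∅
  | .act a b _ => {a, b}
  | .seq g1 g2 => parts g1 ∪ parts g2
  | .par g1 g2 => parts g1 ∪ parts g2
  | .cho g1 g2 => parts g1 ∪ parts g2

/-- The semantics `⟦G⟧`: a labelled event structure, or `none` (i.e. `⊥`) when a side
condition fails (the grammar requires `A ≠ B` in interactions; parallel requires disjoint
label sets; choice requires well-branchedness). -/
noncomputable def gsem [Nonempty P] [Nonempty M] : GC P M → Option (ES P M)
  | .nil => some esEmpty
  | .act a b m => if a = b then none else some (esAct a b m)
  | .seq g1 g2 =>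
      match gsem g1, gsem g2 with
      | some E1, some E2 => some (esSeq E1 E2)
      | _, _ => none
  | .par g1 g2 =>
      match gsem g1, gsem g2 with
      | some E1, some E2 =>
          if Disjoint E1.lblSet E2.lblSet then some (esTensor E1 E2) else none
      | _, _ => none
  | .cho g1 g2 =>
      match gsem g1, gsem g2 with
      | some E1, some E2 => if wb E1 E2 then some (esSum E1 E2) else none
      | _, _ => none

/-! ## The typing system -/

/-- Output uniform sets of labels. -/
def outUniform (U V : Set (Label P M)) : Prop := Disjoint U V ∧ U ∪ V ⊆ Lout

/-- Input uniform sets of labels. -/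
def inUniform (U V : Set (Label P M)) : Prop := Disjoint U V ∧ U ∪ V ⊆ Lin

/-- The compatibility condition `compch(φ1,φ2,Π)` of rule t-ch. -/
def compch (φ1 φ2 : Set (Label P M)) (Γ : Set P) : Prop :=
  ∃ A ∈ Γ,
    (outUniform (hat φ1 A) (hat φ2 A) ∧ hat φ1 A ≠ ∅ ∧ hat φ2 A ≠ ∅) ∧
    (∀ A' ∈ Γ, (outUniform (hat φ1 A') (hat φ2 A') ∧ hat φ1 A' ≠ ∅ ∧ hat φ2 A' ≠ ∅) →
        A' = A) ∧
    ∀ B ∈ Γ, B ≠ A →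
      inUniform (hat φ1 B) (hat φ2 B) ∧ (hat φ1 B = ∅ ↔ hat φ2 B = ∅)

/-- The typing judgement `Π ⊢ G : ⟨φ,Λ⟩`. -/
inductive Typing : Set P → GC P M → Set (Label P M) → Set (Label P M) → Prop where
  | temp : Typing ∅ GC.nil ∅ ∅
  | tint {a b : P} {m : M} (hab : a ≠ b) :
      Typing {a, b} (GC.act a b m)
        {Label.out a b m, Label.inp a b m} {Label.out a b m, Label.inp a b m}
  | tseq {Γ1 Γ2 : Set P} {g1 g2 : GC P M} {φ1 φ2 Λ1 Λ2 : Set (Label P M)} :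
      Typing Γ1 g1 φ1 Λ1 → Typing Γ2 g2 φ2 Λ2 →
      Typing (Γ1 ∪ Γ2) (GC.seq g1 g2) (φ1 ∪ lminus φ2 Γ1) (Λ2 ∪ lminus Λ1 Γ2)
  | tpar {Γ1 Γ2 : Set P} {g1 g2 : GC P M} {φ1 φ2 Λ1 Λ2 : Set (Label P M)} :
      Typing Γ1 g1 φ1 Λ1 → Typing Γ2 g2 φ2 Λ2 → Γ1 ∩ Γ2 = ∅ →
      Typing (Γ1 ∪ Γ2) (GC.par g1 g2) (φ1 ∪ φ2) (Λ1 ∪ Λ2)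
  | tch {Γ : Set P} {g1 g2 : GC P M} {φ1 φ2 Λ1 Λ2 : Set (Label P M)} :
      Typing Γ g1 φ1 Λ1 → Typing Γ g2 φ2 Λ2 → compch φ1 φ2 Γ →
      Typing Γ (GC.cho g1 g2) (φ1 ∪ φ2) (Λ1 ∪ Λ2)


/-! ## One-hole contexts and their typing (hole axiom `Γh ⊢ [·] : ⟨φh,Λh⟩`) -/

/-- g-choreography contexts with a single hole. -/
inductive Ctx (P M : Type) where
  | hole : Ctx P M
  | seqL : Ctx P M → GC P M → Ctx P M
  | seqR : GC P M → Ctx P M → Ctx P M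
  | parL : Ctx P M → GC P M → Ctx P M
  | parR : GC P M → Ctx P M → Ctx P M
  | choL : Ctx P M → GC P M → Ctx P M
  | choR : GC P M → Ctx P M → Ctx P M

/-- `C.fill g = C[g]`, the replacement of the hole of `C` by `g`. -/
def Ctx.fill : Ctx P M → GC P M → GC P M
  | .hole, g => g
  | .seqL c g2, g => GC.seq (c.fill g) g2
  | .seqR g1 c, g => GC.seq g1 (c.fill g)
  | .parL c g2, g => GC.par (c.fill g) g2
  | .parR g1 c, g => GC.par g1 (c.fill g)
  | .choL c g2, g => GC.cho (c.fill g) g2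
  | .choR g1 c, g => GC.cho g1 (c.fill g)

/-- Typing of one-hole contexts in the type system extended with the axiom
`Γh ⊢ [·] : ⟨φh,Λh⟩` for the hole. -/
inductive CTyping (Γh : Set P) (φh Λh : Set (Label P M)) :
    Set P → Ctx P M → Set (Label P M) → Set (Label P M) → Prop where
  | hole : CTyping Γh φh Λh Γh Ctx.hole φh Λh
  | seqL {Γ1 Γ2 : Set P} {c : Ctx P M} {g : GC P M} {φ1 φ2 Λ1 Λ2 : Set (Label P M)} :
      CTyping Γh φh Λh Γ1 c φ1 Λ1 → Typing Γ2 g φ2 Λ2 →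
      CTyping Γh φh Λh (Γ1 ∪ Γ2) (Ctx.seqL c g) (φ1 ∪ lminus φ2 Γ1) (Λ2 ∪ lminus Λ1 Γ2)
  | seqR {Γ1 Γ2 : Set P} {g : GC P M} {c : Ctx P M} {φ1 φ2 Λ1 Λ2 : Set (Label P M)} :
      Typing Γ1 g φ1 Λ1 → CTyping Γh φh Λh Γ2 c φ2 Λ2 →
      CTyping Γh φh Λh (Γ1 ∪ Γ2) (Ctx.seqR g c) (φ1 ∪ lminus φ2 Γ1) (Λ2 ∪ lminus Λ1 Γ2)
  | parL {Γ1 Γ2 : Set P} {c : Ctx P M} {g : GC P M} {φ1 φ2 Λ1 Λ2 : Set (Label P M)} :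
      CTyping Γh φh Λh Γ1 c φ1 Λ1 → Typing Γ2 g φ2 Λ2 → Γ1 ∩ Γ2 = ∅ →
      CTyping Γh φh Λh (Γ1 ∪ Γ2) (Ctx.parL c g) (φ1 ∪ φ2) (Λ1 ∪ Λ2)
  | parR {Γ1 Γ2 : Set P} {g : GC P M} {c : Ctx P M} {φ1 φ2 Λ1 Λ2 : Set (Label P M)} :
      Typing Γ1 g φ1 Λ1 → CTyping Γh φh Λh Γ2 c φ2 Λ2 → Γ1 ∩ Γ2 = ∅ →
      CTyping Γh φh Λh (Γ1 ∪ Γ2) (Ctx.parR g c) (φ1 ∪ φ2) (Λ1 ∪ Λ2)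
  | choL {Γ : Set P} {c : Ctx P M} {g : GC P M} {φ1 φ2 Λ1 Λ2 : Set (Label P M)} :
      CTyping Γh φh Λh Γ c φ1 Λ1 → Typing Γ g φ2 Λ2 → compch φ1 φ2 Γ →
      CTyping Γh φh Λh Γ (Ctx.choL c g) (φ1 ∪ φ2) (Λ1 ∪ Λ2)
  | choR {Γ : Set P} {g : GC P M} {c : Ctx P M} {φ1 φ2 Λ1 Λ2 : Set (Label P M)} :
      Typing Γ g φ1 Λ1 → CTyping Γh φh Λh Γ c φ2 Λ2 → compch φ1 φ2 Γ →
      CTyping Γh φh Λh Γ (Ctx.choR g c) (φ1 ∪ φ2) (Λ1 ∪ Λ2)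

/-! ## Refinable actions, t-ref, and refinement -/

/-- The three side conditions of the axiom schema t-ref for the refinable action
`A → m1…mn : B1,…,Bn`, represented by the initiator `A` and the nonempty list
`l = [(m1,B1),…,(mn,Bn)]` with pairwise distinct `Bi`. -/
def trefCond (Γ : Set P) (φ Λ : Set (Label P M)) (A : P) (l : List (M × P)) : Prop :=
  l ≠ [] ∧ (l.map Prod.snd).Nodup ∧
  sbjSet φ = Γ ∧ sbjSet Λ = Γ ∧ sbjSet (φ ∩ Lout) = {A} ∧
  ∀ p ∈ l, ∃ C ∈ Γ, hat Λ p.2 = {Label.inp C p.2 p.1}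

/-- `G ref A→m1…mn:B1,…,Bn`: the ground g-choreography `G` refines the refinable action
given by initiator `A` and list `l = [(m1,B1),…,(mn,Bn)]`. -/
def Refines [Nonempty P] [Nonempty M] (G : GC P M) (A : P) (l : List (M × P)) : Prop :=
  ∃ E : ES P M, gsem G = some E ∧
    sbjSet E.minLbl = {A} ∧
    ∀ x ∈ E.MaxC, ∀ p ∈ l, ∃ C ∈ parts G,
      Label.inp C p.2 p.1 ∈ E.lbl '' (E.maxIn (E.projC x p.2))

/-! ## Multi-hole contexts -/

/-- g-choreography contexts with (numbered) holes. -/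
inductive MCtx (P M : Type) where
  | hole : ℕ → MCtx P M
  | nil : MCtx P M
  | act : P → P → M → MCtx P M
  | seq : MCtx P M → MCtx P M → MCtx P M
  | par : MCtx P M → MCtx P M → MCtx P M
  | cho : MCtx P M → MCtx P M → MCtx P M

/-- The (indices of the) holes occurring in a multi-hole context. -/
def MCtx.holes : MCtx P M → List ℕ
  | .hole i => [i]
  | .nil => []
  | .act _ _ _ => []
  | .seq c1 c2 => c1.holes ++ c2.holes
  | .par c1 c2 => c1.holes ++ c2.holes
  | .cho c1 c2 => c1.holes ++ c2.holes

/-- `C.fill g`: replace each hole `[·]i` by `g i`. -/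
def MCtx.fill : MCtx P M → (ℕ → GC P M) → GC P M
  | .hole i, g => g i
  | .nil, _ => GC.nil
  | .act a b m, _ => GC.act a b m
  | .seq c1 c2, g => GC.seq (c1.fill g) (c2.fill g)
  | .par c1 c2, g => GC.par (c1.fill g) (c2.fill g)
  | .cho c1 c2, g => GC.cho (c1.fill g) (c2.fill g)

/-- Typing of multi-hole contexts in the extended type system, where hole `i` is typed by
the axiom `(σ i).1 ⊢ [·]i : ⟨(σ i).2.1, (σ i).2.2⟩`. -/
inductive MTyping (σ : ℕ → Set P × Set (Label P M) × Set (Label P M)) :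
    Set P → MCtx P M → Set (Label P M) → Set (Label P M) → Prop where
  | hole (i : ℕ) : MTyping σ (σ i).1 (MCtx.hole i) (σ i).2.1 (σ i).2.2
  | temp : MTyping σ ∅ MCtx.nil ∅ ∅
  | tint {a b : P} {m : M} (hab : a ≠ b) :
      MTyping σ {a, b} (MCtx.act a b m)
        {Label.out a b m, Label.inp a b m} {Label.out a b m, Label.inp a b m}
  | tseq {Γ1 Γ2 : Set P} {c1 c2 : MCtx P M} {φ1 φ2 Λ1 Λ2 : Set (Label P M)} :
      MTyping σ Γ1 c1 φ1 Λ1 → MTyping σ Γ2 c2 φ2 Λ2 →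
      MTyping σ (Γ1 ∪ Γ2) (MCtx.seq c1 c2) (φ1 ∪ lminus φ2 Γ1) (Λ2 ∪ lminus Λ1 Γ2)
  | tpar {Γ1 Γ2 : Set P} {c1 c2 : MCtx P M} {φ1 φ2 Λ1 Λ2 : Set (Label P M)} :
      MTyping σ Γ1 c1 φ1 Λ1 → MTyping σ Γ2 c2 φ2 Λ2 → Γ1 ∩ Γ2 = ∅ →
      MTyping σ (Γ1 ∪ Γ2) (MCtx.par c1 c2) (φ1 ∪ φ2) (Λ1 ∪ Λ2)
  | tch {Γ : Set P} {c1 c2 : MCtx P M} {φ1 φ2 Λ1 Λ2 : Set (Label P M)} :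
      MTyping σ Γ c1 φ1 Λ1 → MTyping σ Γ c2 φ2 Λ2 → compch φ1 φ2 Γ →
      MTyping σ Γ (MCtx.cho c1 c2) (φ1 ∪ φ2) (Λ1 ∪ Λ2)


/-!
The proof is an induction on the typing derivation that builds `E = ⟦G⟧` together with the
facts about `E` the typing rules rely on (`ES.Invariant`): `E` is finite with symmetric
conflict, its participants are exactly `Π`, every event lies in a configuration, and every
participant of `Π` has an event in every maximal configuration.

Each component of `E₁ ⊗ E₂`, `E₁ + E₂` and `E₁ ; E₂` sits inside the composite through a tag map
preserving and reflecting events, labels, order and conflict (`ES.IsEmbedding`); where the image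
is downward (upward) closed, minimal (maximal) events of projections correspond. This gives
`min` and `max` of tensors and sums as unions. In `E₁ ; E₂`, an event of the copy of `E₂`
appended to a maximal configuration `x` of `E₁` lies above every event of `x` with the same
subject; as `x` has an `A`-event for every `A ∈ Π₁`, the minimal `A`-events are those of `E₁`,
and dually for the maximal events of participants of `Π₂`. The invariant survives `E₁ ; E₂`
because every configuration lies in some `x ∪ copyₓ(y)` with `x` maximal: distinct copies are in
conflict, and the `E₁`-part of a configuration meeting `copyₓ` is compatible with `x`, hence
contained in it. Finally, once `φᵢ̂(A)` is identified with the minimal labels of `Eᵢ↾A`,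
`compch` is well-branchedness.
-/

@[simp] lemma tagL_inj {e f : ℕ} : tagL e = tagL f ↔ e = f := by simp [tagL]
@[simp] lemma tagR_inj {e f : ℕ} : tagR e = tagR f ↔ e = f := by simp [tagR]
@[simp] lemma tagC_inj {k k' e f : ℕ} : tagC k e = tagC k' f ↔ k = k' ∧ e = f := by simp [tagC]
@[simp] lemma tagL_ne_tagR {e f : ℕ} : tagL e ≠ tagR f := by simp [tagL, tagR]
@[simp] lemma tagR_ne_tagL {e f : ℕ} : tagR f ≠ tagL e := tagL_ne_tagR.symm
@[simp] lemma tagL_ne_tagC {e k f : ℕ} : tagL e ≠ tagC k f := by simp [tagL, tagC]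
@[simp] lemma tagC_ne_tagL {e k f : ℕ} : tagC k f ≠ tagL e := tagL_ne_tagC.symm

lemma tagL_injective : Function.Injective tagL := fun _ _ => tagL_inj.1
lemma tagR_injective : Function.Injective tagR := fun _ _ => tagR_inj.1
lemma tagC_injective (k : ℕ) : Function.Injective (tagC k) := fun _ _ h => (tagC_inj.1 h).2

lemma encSet_injOn : Set.InjOn encSet {x | x.Finite} := by
  intro x (hx : x.Finite) y (hy : y.Finite) h
  rw [encSet, dif_pos hx, encSet, dif_pos hy] at h
  rw [← hx.coe_toFinset, ← hy.coe_toFinset, Finset.geomSum_injective le_rfl h]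

namespace ES

variable {E F : ES P M} {x y z : Set ℕ}

lemma config_empty : E.Config ∅ := ⟨Set.empty_subset _, by simp, by simp⟩

lemma Config.union (hx : E.Config x) (hy : E.Config y)
    (hxy : ∀ e ∈ x, ∀ f ∈ y, ¬ E.conf e f ∧ ¬ E.conf f e) : E.Config (x ∪ y) := by
  refine ⟨Set.union_subset hx.1 hy.1, ?_, ?_⟩
  · rintro e (he | he) f hf hfe
    exacts [Or.inl (hx.2.1 e he f hf hfe), Or.inr (hy.2.1 e he f hf hfe)]
  · rintro e (he | he) f (hf | hf)
    exacts [hx.2.2 e he f hf, (hxy e he f hf).1, (hxy f hf e he).2, hy.2.2 e he f hf]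

lemma eq_of_mem_maxC (hz : z ∈ E.MaxC) (hy : E.Config y) (hzy : z ⊆ y) : z = y :=
  (hz.2 y hy hzy).symm

lemma exists_maxC_superset (hfin : E.ev.Finite) (hx : E.Config x) : ∃ y ∈ E.MaxC, x ⊆ y := by
  have hfin' : {y | E.Config y}.Finite := hfin.finite_subsets.subset fun y hy => hy.1
  obtain ⟨y, hxy, hy⟩ := hfin'.exists_le_maximal hx
  exact ⟨y, ⟨hy.prop, fun y' hy' hyy' => (hy.eq_of_le hy' hyy').symm⟩, hxy⟩

lemma maxC_finite (hfin : E.ev.Finite) : E.MaxC.Finite :=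
  hfin.finite_subsets.subset fun _ hx => hx.1.1

lemma injOn_encSet_maxC (hfin : E.ev.Finite) : Set.InjOn encSet E.MaxC :=
  encSet_injOn.mono fun _ hx => hfin.subset hx.1.1

lemma minLbl_eq_empty (h : E.ev = ∅) : E.minLbl = ∅ := by
  simp [minLbl, minEv, minIn, h]

lemma maxLbl_eq_empty (h : E.ev = ∅) : E.maxLbl = ∅ := by
  simp [maxLbl, maxEv, maxIn, h]

lemma minEv_eq_ev (h : ∀ u v, E.le u v → u = v) : E.minEv = E.ev :=
  Set.sep_eq_self_iff_mem_true.2 fun _ _ _ _ hfe => h _ _ hfe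

lemma maxEv_eq_ev (h : ∀ u v, E.le u v → u = v) : E.maxEv = E.ev :=
  Set.sep_eq_self_iff_mem_true.2 fun _ _ _ _ hef => (h _ _ hef).symm

/-- Reversing the order turns maximal events into minimal ones: `E.dual.minLbl` is `E.maxLbl`
by definition. -/
def dual (E : ES P M) : ES P M := { E with le := fun u v => E.le v u }

structure IsEmbedding (ι : ℕ → ℕ) (F E : ES P M) : Prop where
  injective : ι.Injective
  mem_iff : ∀ e, ι e ∈ E.ev ↔ e ∈ F.ev
  lbl_eq : ∀ e, E.lbl (ι e) = F.lbl e
  le_iff : ∀ e ∈ F.ev, ∀ f ∈ F.ev, E.le (ι e) (ι f) ↔ F.le e f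
  conf_iff : ∀ e ∈ F.ev, ∀ f ∈ F.ev, E.conf (ι e) (ι f) ↔ F.conf e f

def IsLowerRange (ι : ℕ → ℕ) (E : ES P M) : Prop := ∀ u v, E.le u (ι v) → u ∈ Set.range ι

def IsUpperRange (ι : ℕ → ℕ) (E : ES P M) : Prop := ∀ u v, E.le (ι u) v → v ∈ Set.range ι

variable {ι : ℕ → ℕ}

lemma IsLowerRange.proj (h : IsLowerRange ι E) (A : P) : IsLowerRange ι (E.proj A) :=
  fun u v huv => h u v huv.1

lemma IsUpperRange.dual (h : IsUpperRange ι E) : IsLowerRange ι E.dual :=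
  fun u v huv => h v u huv

lemma IsUpperRange.proj (h : IsUpperRange ι E) (A : P) : IsUpperRange ι (E.proj A) :=
  fun u v huv => h u v huv.1

namespace IsEmbedding

lemma dual (h : IsEmbedding ι F E) : IsEmbedding ι F.dual E.dual :=
  ⟨h.injective, h.mem_iff, h.lbl_eq, fun e he f hf => h.le_iff f hf e he, h.conf_iff⟩

lemma proj (h : IsEmbedding ι F E) (A : P) : IsEmbedding ι (F.proj A) (E.proj A) := by
  refine ⟨h.injective, fun e => ?_, h.lbl_eq, fun e he f hf => ?_, fun e he f hf => ?_⟩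
  · simp only [ES.proj, Set.mem_sep_iff, h.mem_iff, h.lbl_eq]
  · simp only [ES.proj, h.mem_iff, h.lbl_eq, h.le_iff e he.1 f hf.1]
  · simp only [ES.proj, h.mem_iff, h.lbl_eq, h.conf_iff e he.1 f hf.1]

lemma mem_minEv_iff (h : IsEmbedding ι F E) (hι : IsLowerRange ι E) {e : ℕ} :
    ι e ∈ E.minEv ↔ e ∈ F.minEv := by
  constructor
  · rintro ⟨he, hmin⟩
    have he' := (h.mem_iff e).1 he
    exact ⟨he', fun f hf hfe =>
      h.injective (hmin _ ((h.mem_iff f).2 hf) ((h.le_iff f hf e he').2 hfe))⟩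
  · rintro ⟨he, hmin⟩
    refine ⟨(h.mem_iff e).2 he, fun u hu hue => ?_⟩
    obtain ⟨f, rfl⟩ := hι u e hue
    have hf := (h.mem_iff f).1 hu
    rw [hmin f hf ((h.le_iff f hf e he).1 hue)]

lemma minLbl_subset (h : IsEmbedding ι F E) (hι : IsLowerRange ι E) : F.minLbl ⊆ E.minLbl := by
  rintro _ ⟨e, he, rfl⟩
  exact ⟨ι e, (h.mem_minEv_iff hι).2 he, h.lbl_eq e⟩

lemma lbl_mem_minLbl (h : IsEmbedding ι F E) (hι : IsLowerRange ι E) {e : ℕ}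
    (he : ι e ∈ E.minEv) : E.lbl (ι e) ∈ F.minLbl :=
  ⟨e, (h.mem_minEv_iff hι).1 he, (h.lbl_eq e).symm⟩

lemma preimage_config (h : IsEmbedding ι F E) (hz : E.Config z) : F.Config (ι ⁻¹' z) := by
  have hsub : ι ⁻¹' z ⊆ F.ev := fun e he => (h.mem_iff e).1 (hz.1 he)
  refine ⟨hsub, fun e he f hf hfe => ?_, fun e he f hf hef => ?_⟩
  · exact hz.2.1 _ he _ ((h.mem_iff f).2 hf) ((h.le_iff f hf e (hsub he)).2 hfe)
  · exact hz.2.2 _ he _ hf ((h.conf_iff e (hsub he) f (hsub hf)).2 hef)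

lemma image_config (h : IsEmbedding ι F E) (hι : IsLowerRange ι E) (hx : F.Config x) :
    E.Config (ι '' x) := by
  refine ⟨?_, ?_, ?_⟩
  · rintro _ ⟨e, he, rfl⟩
    exact (h.mem_iff e).2 (hx.1 he)
  · rintro _ ⟨e, he, rfl⟩ u hu hue
    obtain ⟨f, rfl⟩ := hι u e hue
    have hf := (h.mem_iff f).1 hu
    exact ⟨f, hx.2.1 e he f hf ((h.le_iff f hf e (hx.1 he)).1 hue), rfl⟩
  · rintro _ ⟨e, he, rfl⟩ _ ⟨f, hf, rfl⟩ hef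
    exact hx.2.2 e he f hf ((h.conf_iff e (hx.1 he) f (hx.1 hf)).1 hef)

end IsEmbedding

lemma minLbl_eq_of_cover {α : Type*} [Nonempty α] {ι : α → ℕ → ℕ}
    (h : ∀ i, IsEmbedding (ι i) F E) (hι : ∀ i, IsLowerRange (ι i) E)
    (hE : E.minEv ⊆ ⋃ i, Set.range (ι i)) : E.minLbl = F.minLbl := by
  refine subset_antisymm ?_ ((h (Classical.arbitrary α)).minLbl_subset (hι _))
  rintro _ ⟨u, hu, rfl⟩
  obtain ⟨i, e, rfl⟩ := Set.mem_iUnion.1 (hE hu)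
  exact (h i).lbl_mem_minLbl (hι i) hu

lemma IsEmbedding.minLbl_eq (h : IsEmbedding ι F E) (hι : IsLowerRange ι E)
    (hE : E.minEv ⊆ Set.range ι) : E.minLbl = F.minLbl :=
  minLbl_eq_of_cover (α := Unit) (fun _ => h) (fun _ => hι) (by rwa [Set.iUnion_const])

lemma minLbl_eq_union {ι₁ ι₂ : ℕ → ℕ} {F₁ F₂ : ES P M} (h₁ : IsEmbedding ι₁ F₁ E)
    (h₂ : IsEmbedding ι₂ F₂ E) (hι₁ : IsLowerRange ι₁ E) (hι₂ : IsLowerRange ι₂ E)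
    (hE : E.ev ⊆ Set.range ι₁ ∪ Set.range ι₂) : E.minLbl = F₁.minLbl ∪ F₂.minLbl := by
  refine subset_antisymm ?_ (Set.union_subset (h₁.minLbl_subset hι₁) (h₂.minLbl_subset hι₂))
  rintro _ ⟨u, hu, rfl⟩
  rcases hE hu.1 with ⟨e, rfl⟩ | ⟨e, rfl⟩
  exacts [Or.inl (h₁.lbl_mem_minLbl hι₁ hu), Or.inr (h₂.lbl_mem_minLbl hι₂ hu)]

structure Invariant (Γ : Set P) (E : ES P M) : Prop where
  finite : E.ev.Finite
  conf_symm : ∀ ⦃u v⦄, E.conf u v → E.conf v u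
  sbj_mem : ∀ e ∈ E.ev, (E.lbl e).sbj ∈ Γ
  exists_sbj : ∀ A ∈ Γ, ∃ e ∈ E.ev, (E.lbl e).sbj = A
  exists_config : ∀ e ∈ E.ev, ∃ x, E.Config x ∧ e ∈ x
  maxC_sbj : ∀ x ∈ E.MaxC, ∀ A ∈ Γ, ∃ e ∈ x, (E.lbl e).sbj = A

variable {Γ : Set P}

lemma Invariant.exists_maxC (h : E.Invariant Γ) {e : ℕ} (he : e ∈ E.ev) :
    ∃ x ∈ E.MaxC, e ∈ x := by
  obtain ⟨x, hx, hex⟩ := h.exists_config e he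
  obtain ⟨y, hy, hxy⟩ := exists_maxC_superset h.finite hx
  exact ⟨y, hy, hxy hex⟩

lemma Invariant.maxC_nonempty (h : E.Invariant Γ) : E.MaxC.Nonempty := by
  obtain ⟨x, hx, -⟩ := exists_maxC_superset h.finite (config_empty (E := E))
  exact ⟨x, hx⟩

lemma Invariant.proj_ev_eq_empty (h : E.Invariant Γ) {A : P} (hA : A ∉ Γ) :
    (E.proj A).ev = ∅ :=
  Set.eq_empty_of_forall_notMem fun e he => hA (he.2 ▸ h.sbj_mem e he.1)

lemma Invariant.disjoint_lblSet {Γ' : Set P} {E' : ES P M} (h : E.Invariant Γ)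
    (h' : E'.Invariant Γ') (hΓ : Γ ∩ Γ' = ∅) : Disjoint E.lblSet E'.lblSet := by
  rw [Set.disjoint_left]
  rintro _ ⟨e, he, rfl⟩ ⟨f, hf, hfe⟩
  exact hΓ.subset ⟨h.sbj_mem e he, hfe ▸ h'.sbj_mem f hf⟩

lemma Invariant.maxC_sbj_of_subset_range {F : ES P M} {ι : ℕ → ℕ} (h : F.Invariant Γ)
    (hι : F.IsEmbedding ι E) (hlow : IsLowerRange ι E) {z : Set ℕ} (hz : z ∈ E.MaxC)
    (hzι : z ⊆ Set.range ι) : ∀ A ∈ Γ, ∃ e ∈ z, (E.lbl e).sbj = A := by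
  obtain ⟨x, hx, hzx⟩ := exists_maxC_superset h.finite (hι.preimage_config hz.1)
  have hz_eq : z = ι '' x := eq_of_mem_maxC hz (hι.image_config hlow hx.1) fun u hu => by
    obtain ⟨e, rfl⟩ := hzι hu
    exact ⟨e, hzx hu, rfl⟩
  intro A hA
  obtain ⟨e, hex, rfl⟩ := h.maxC_sbj x hx A hA
  exact ⟨ι e, hz_eq ▸ ⟨e, hex, rfl⟩, by rw [hι.lbl_eq]⟩

end ES

open ES

section Constructions

variable {E1 E2 : ES P M} {Γ Γ1 Γ2 : Set P} {x y z : Set ℕ} {A a b : P} {m : M}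

@[simp] lemma esTensor_lbl_tagL (e : ℕ) : (esTensor E1 E2).lbl (tagL e) = E1.lbl e := by
  simp [esTensor, tagL]

@[simp] lemma esTensor_lbl_tagR (e : ℕ) : (esTensor E1 E2).lbl (tagR e) = E2.lbl e := by
  simp [esTensor, tagR]

lemma esTensor_isEmbedding_tagL : IsEmbedding tagL E1 (esTensor E1 E2) :=
  ⟨tagL_injective, fun e => by simp [esTensor], fun e => by simp,
    fun e he f hf => by simp [esTensor, he, hf], fun e he f hf => by simp [esTensor, he, hf]⟩

lemma esTensor_isEmbedding_tagR : IsEmbedding tagR E2 (esTensor E1 E2) :=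
  ⟨tagR_injective, fun e => by simp [esTensor], fun e => by simp,
    fun e he f hf => by simp [esTensor, he, hf], fun e he f hf => by simp [esTensor, he, hf]⟩

lemma esTensor_isLowerRange_tagL : IsLowerRange tagL (esTensor E1 E2) := by
  rintro _ _ (⟨e, -, f, -, -, rfl, h⟩ | ⟨e, -, f, -, -, rfl, h⟩) <;> simp_all

lemma esTensor_isLowerRange_tagR : IsLowerRange tagR (esTensor E1 E2) := by
  rintro _ _ (⟨e, -, f, -, -, rfl, h⟩ | ⟨e, -, f, -, -, rfl, h⟩) <;> simp_all

lemma esTensor_isUpperRange_tagL : IsUpperRange tagL (esTensor E1 E2) := by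
  rintro _ _ (⟨e, -, f, -, -, h, rfl⟩ | ⟨e, -, f, -, -, h, rfl⟩) <;> simp_all

lemma esTensor_isUpperRange_tagR : IsUpperRange tagR (esTensor E1 E2) := by
  rintro _ _ (⟨e, -, f, -, -, h, rfl⟩ | ⟨e, -, f, -, -, h, rfl⟩) <;> simp_all

lemma esTensor_ev_subset : (esTensor E1 E2).ev ⊆ Set.range tagL ∪ Set.range tagR :=
  Set.union_subset_union (Set.image_subset_range _ _) (Set.image_subset_range _ _)

lemma esTensor_proj_minLbl (A : P) :
    ((esTensor E1 E2).proj A).minLbl = (E1.proj A).minLbl ∪ (E2.proj A).minLbl :=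
  minLbl_eq_union (esTensor_isEmbedding_tagL.proj A) (esTensor_isEmbedding_tagR.proj A)
    (esTensor_isLowerRange_tagL.proj A) (esTensor_isLowerRange_tagR.proj A)
    fun _ hu => esTensor_ev_subset hu.1

lemma esTensor_proj_maxLbl (A : P) :
    ((esTensor E1 E2).proj A).maxLbl = (E1.proj A).maxLbl ∪ (E2.proj A).maxLbl :=
  minLbl_eq_union (esTensor_isEmbedding_tagL.proj A).dual
    (esTensor_isEmbedding_tagR.proj A).dual
    (esTensor_isUpperRange_tagL.proj A).dual (esTensor_isUpperRange_tagR.proj A).dual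
    fun _ hu => esTensor_ev_subset hu.1

lemma esTensor_config_union (hx : E1.Config x) (hy : E2.Config y) :
    (esTensor E1 E2).Config (tagL '' x ∪ tagR '' y) :=
  (esTensor_isEmbedding_tagL.image_config esTensor_isLowerRange_tagL hx).union
    (esTensor_isEmbedding_tagR.image_config esTensor_isLowerRange_tagR hy) <| by
      rintro _ ⟨e, -, rfl⟩ _ ⟨f, -, rfl⟩
      simp [esTensor]

lemma ES.Invariant.tensor (h1 : E1.Invariant Γ1) (h2 : E2.Invariant Γ2) :
    (esTensor E1 E2).Invariant (Γ1 ∪ Γ2) where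
  finite := (h1.finite.image tagL).union (h2.finite.image tagR)
  conf_symm := by
    rintro _ _ (⟨e, he, f, hf, hef, rfl, rfl⟩ | ⟨e, he, f, hf, hef, rfl, rfl⟩)
    exacts [Or.inl ⟨f, hf, e, he, h1.conf_symm hef, rfl, rfl⟩,
      Or.inr ⟨f, hf, e, he, h2.conf_symm hef, rfl, rfl⟩]
  sbj_mem := by
    rintro _ (⟨e, he, rfl⟩ | ⟨e, he, rfl⟩)
    exacts [by simpa using Or.inl (h1.sbj_mem e he), by simpa using Or.inr (h2.sbj_mem e he)]
  exists_sbj := by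
    rintro A (hA | hA)
    · obtain ⟨e, he, rfl⟩ := h1.exists_sbj A hA
      exact ⟨tagL e, Or.inl ⟨e, he, rfl⟩, by simp⟩
    · obtain ⟨e, he, rfl⟩ := h2.exists_sbj A hA
      exact ⟨tagR e, Or.inr ⟨e, he, rfl⟩, by simp⟩
  exists_config := by
    rintro _ (⟨e, he, rfl⟩ | ⟨e, he, rfl⟩)
    · obtain ⟨x, hx, hex⟩ := h1.exists_config e he
      exact ⟨_, esTensor_config_union hx config_empty, Or.inl ⟨e, hex, rfl⟩⟩
    · obtain ⟨y, hy, hey⟩ := h2.exists_config e he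
      exact ⟨_, esTensor_config_union config_empty hy, Or.inr ⟨e, hey, rfl⟩⟩
  maxC_sbj := by
    intro z hz A hA
    obtain ⟨x, hx, hzx⟩ :=
      exists_maxC_superset h1.finite (esTensor_isEmbedding_tagL.preimage_config hz.1)
    obtain ⟨y, hy, hzy⟩ :=
      exists_maxC_superset h2.finite (esTensor_isEmbedding_tagR.preimage_config hz.1)
    have hz_eq : z = tagL '' x ∪ tagR '' y := by
      refine eq_of_mem_maxC hz (esTensor_config_union hx.1 hy.1) fun u hu => ?_
      rcases hz.1.1 hu with ⟨e, -, rfl⟩ | ⟨e, -, rfl⟩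
      exacts [Or.inl ⟨e, hzx hu, rfl⟩, Or.inr ⟨e, hzy hu, rfl⟩]
    rcases hA with hA | hA
    · obtain ⟨e, he, rfl⟩ := h1.maxC_sbj x hx A hA
      exact ⟨tagL e, hz_eq ▸ Or.inl ⟨e, he, rfl⟩, by simp⟩
    · obtain ⟨e, he, rfl⟩ := h2.maxC_sbj y hy A hA
      exact ⟨tagR e, hz_eq ▸ Or.inr ⟨e, he, rfl⟩, by simp⟩

lemma esSum_isEmbedding_tagL : IsEmbedding tagL E1 (esSum E1 E2) :=
  let h := esTensor_isEmbedding_tagL (E1 := E1) (E2 := E2)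
  ⟨h.injective, h.mem_iff, h.lbl_eq, h.le_iff, fun e he f hf => by simp [esSum, esTensor, he, hf]⟩

lemma esSum_isEmbedding_tagR : IsEmbedding tagR E2 (esSum E1 E2) :=
  let h := esTensor_isEmbedding_tagR (E1 := E1) (E2 := E2)
  ⟨h.injective, h.mem_iff, h.lbl_eq, h.le_iff, fun e he f hf => by simp [esSum, esTensor, he, hf]⟩

lemma esSum_config_subset_range (hz : (esSum E1 E2).Config z) :
    z ⊆ Set.range tagL ∨ z ⊆ Set.range tagR := by
  refine or_iff_not_imp_left.2 fun hzL v hv => ?_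
  obtain ⟨u, hu, huL⟩ := Set.not_subset.1 hzL
  rcases hz.1 hu with ⟨e, -, rfl⟩ | ⟨f, hf, rfl⟩
  · exact (huL ⟨e, rfl⟩).elim
  rcases hz.1 hv with ⟨e, he, rfl⟩ | ⟨f', -, rfl⟩
  · exact (hz.2.2 _ hv _ hu (Or.inr ⟨e, he, f, hf, Or.inl ⟨rfl, rfl⟩⟩)).elim
  · exact ⟨f', rfl⟩

lemma ES.Invariant.sum (h1 : E1.Invariant Γ) (h2 : E2.Invariant Γ) :
    (esSum E1 E2).Invariant Γ where
  finite := (h1.finite.image tagL).union (h2.finite.image tagR)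
  conf_symm := by
    rintro u v (huv | ⟨e, he, f, hf, ⟨rfl, rfl⟩ | ⟨rfl, rfl⟩⟩)
    · exact Or.inl ((h1.tensor h2).conf_symm huv)
    · exact Or.inr ⟨e, he, f, hf, Or.inr ⟨rfl, rfl⟩⟩
    · exact Or.inr ⟨e, he, f, hf, Or.inl ⟨rfl, rfl⟩⟩
  sbj_mem e he := Set.union_self Γ ▸ (h1.tensor h2).sbj_mem e he
  exists_sbj A hA := (h1.tensor h2).exists_sbj A (Or.inl hA)
  exists_config := by
    rintro _ (⟨e, he, rfl⟩ | ⟨e, he, rfl⟩)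
    · obtain ⟨x, hx, hex⟩ := h1.exists_config e he
      exact ⟨_, esSum_isEmbedding_tagL.image_config esTensor_isLowerRange_tagL hx, e, hex, rfl⟩
    · obtain ⟨y, hy, hey⟩ := h2.exists_config e he
      exact ⟨_, esSum_isEmbedding_tagR.image_config esTensor_isLowerRange_tagR hy, e, hey, rfl⟩
  maxC_sbj z hz := (esSum_config_subset_range hz.1).elim
    (h1.maxC_sbj_of_subset_range esSum_isEmbedding_tagL esTensor_isLowerRange_tagL hz)
    (h2.maxC_sbj_of_subset_range esSum_isEmbedding_tagR esTensor_isLowerRange_tagR hz)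

@[simp] lemma esSeq_lbl_tagL (e : ℕ) : (esSeq E1 E2).lbl (tagL e) = E1.lbl e := by
  simp [esSeq, tagL]

@[simp] lemma esSeq_lbl_tagC (k e : ℕ) : (esSeq E1 E2).lbl (tagC k e) = E2.lbl e := by
  simp [esSeq, tagC]

lemma esSeq_isEmbedding_tagL : IsEmbedding tagL E1 (esSeq E1 E2) :=
  ⟨tagL_injective, fun e => by simp [esSeq], fun e => by simp,
    fun e he f hf => by simp [esSeq, he, hf], fun e he f hf => by simp [esSeq, he, hf]⟩

lemma esSeq_isLowerRange_tagL : IsLowerRange tagL (esSeq E1 E2) := by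
  rintro _ _ (⟨e, -, f, -, -, rfl, -⟩ | ⟨_, -, e, -, f, -, -, rfl, h⟩ |
    ⟨_, -, e, -, f, -, -, rfl, h⟩)
  all_goals simp_all

lemma esSeq_isEmbedding_tagC (hinj : Set.InjOn encSet E1.MaxC) (hx : x ∈ E1.MaxC) :
    IsEmbedding (tagC (encSet x)) E2 (esSeq E1 E2) := by
  refine ⟨tagC_injective _, fun e => ?_, fun e => by simp, fun e he f hf => ?_,
    fun e he f hf => ?_⟩
  · simp only [esSeq, Set.mem_union, Set.mem_image, tagL_ne_tagC, and_false, exists_const,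
      Set.mem_ofPred_eq, tagC_inj, exists_eq_right_right', false_or]
    exact ⟨fun ⟨_, _, he, _⟩ => he, fun he => ⟨x, hx, he, rfl⟩⟩
  · simp only [esSeq, tagC_ne_tagL, and_self, and_false, exists_const, tagC_inj, existsAndEq,
      he, hf, and_true, true_and, false_and, or_false, false_or]
    exact ⟨fun ⟨_, _, h, _⟩ => h, fun h => ⟨x, hx, h, rfl⟩⟩
  · simp only [esSeq, ne_eq, tagC_ne_tagL, and_self, and_false, exists_const, tagC_inj,
      existsAndEq, he, hf, and_true, true_and, false_and, or_self, or_false, false_or]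
    refine ⟨?_, fun h => Or.inl ⟨x, hx, h, rfl⟩⟩
    rintro (⟨_, _, h, _⟩ | ⟨x₁, hx₁, x₂, hx₂, hne, h₁, h₂⟩)
    exacts [h, (hne (hinj hx₁ hx₂ (h₁.symm.trans h₂))).elim]

lemma esSeq_isUpperRange_tagC (k : ℕ) : IsUpperRange (tagC k) (esSeq E1 E2) := by
  rintro _ _ (⟨e, -, f, -, -, h, rfl⟩ | ⟨_, -, e, -, f, -, -, h, rfl⟩ |
    ⟨_, -, e, -, f, -, -, h, rfl⟩)
  all_goals simp_all

lemma esSeq_config_pair (hinj : Set.InjOn encSet E1.MaxC) (hx : x ∈ E1.MaxC)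
    (hy : E2.Config y) : (esSeq E1 E2).Config (tagL '' x ∪ tagC (encSet x) '' y) := by
  have hL : (esSeq E1 E2).Config (tagL '' x) :=
    esSeq_isEmbedding_tagL.image_config esSeq_isLowerRange_tagL hx.1
  have hC := esSeq_isEmbedding_tagC (E2 := E2) hinj hx
  have hcross : ∀ e ∈ x, ∀ f, ¬ (esSeq E1 E2).conf (tagL e) (tagC (encSet x) f) ∧
      ¬ (esSeq E1 E2).conf (tagC (encSet x) f) (tagL e) := by
    intro e he f
    simp only [esSeq, tagL_inj, tagC_ne_tagL, and_false, exists_const, tagL_ne_tagC, tagC_inj,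
      false_and, and_self, or_false, existsAndEq, and_true, true_and, false_or, not_exists, not_and,
      forall_exists_index, and_imp]
    rintro x' hx' - e' he' hee' - hk
    exact hx.1.2.2 e he e' (hinj hx hx' hk ▸ he') hee'
  refine ⟨Set.union_subset hL.1 ?_, ?_, ?_⟩
  · rintro _ ⟨f, hf, rfl⟩
    exact (hC.mem_iff f).2 (hy.1 hf)
  · rintro v (hv | ⟨f, hf, rfl⟩) u hu hvu
    · exact Or.inl (hL.2.1 v hv u hu hvu)
    rcases hvu with ⟨a, -, b, -, -, rfl, h⟩ | ⟨x', -, e, he, f', -, hef, rfl, h⟩ |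
      ⟨x', hx', e, he, f', -, -, rfl, h⟩
    · simp at h
    · obtain ⟨hk, rfl⟩ := tagC_inj.1 h
      exact Or.inr ⟨e, hy.2.1 f hf e he hef, by rw [hk]⟩
    · obtain ⟨hk, -⟩ := tagC_inj.1 h
      exact Or.inl ⟨e, hinj hx' hx hk.symm ▸ he, rfl⟩
  · rintro _ (⟨e, he, rfl⟩ | ⟨e, he, rfl⟩) _ (⟨f, hf, rfl⟩ | ⟨f, hf, rfl⟩)
    · exact hL.2.2 _ ⟨e, he, rfl⟩ _ ⟨f, hf, rfl⟩
    · exact (hcross e he f).1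
    · exact (hcross f hf e).2
    · rw [hC.conf_iff e (hy.1 he) f (hy.1 hf)]
      exact hy.2.2 e he f hf

lemma esSeq_config_subset_pair (hfin : E1.ev.Finite)
    (hsymm : ∀ ⦃u v⦄, E1.conf u v → E1.conf v u) (hz : (esSeq E1 E2).Config z) :
    ∃ x ∈ E1.MaxC, ∃ y, E2.Config y ∧ z ⊆ tagL '' x ∪ tagC (encSet x) '' y := by
  have hinj := injOn_encSet_maxC hfin
  have hx : E1.Config (tagL ⁻¹' z) := esSeq_isEmbedding_tagL.preimage_config hz
  by_cases hcopy : ∃ x₀ ∈ E1.MaxC, ∃ f₀, tagC (encSet x₀) f₀ ∈ z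
  · obtain ⟨x₀, hx₀, f₀, hf₀⟩ := hcopy
    have hC := esSeq_isEmbedding_tagC (E2 := E2) hinj hx₀
    have hf₀' : f₀ ∈ E2.ev := (hC.mem_iff f₀).1 (hz.1 hf₀)
    have hsame : ∀ x' ∈ E1.MaxC, ∀ f, tagC (encSet x') f ∈ z → encSet x' = encSet x₀ := by
      intro x' hx' f hf
      by_contra hne
      have hf' := ((esSeq_isEmbedding_tagC hinj hx').mem_iff f).1 (hz.1 hf)
      exact hz.2.2 _ hf _ hf₀ (Or.inr (Or.inr (Or.inl
        ⟨x', hx', x₀, hx₀, fun h => hne (h ▸ rfl), f, hf', f₀, hf₀', rfl, rfl⟩)))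
    have hnconf : ∀ a ∈ tagL ⁻¹' z, ∀ b ∈ x₀, ¬ E1.conf a b := fun a ha b hb hab =>
      hz.2.2 _ ha _ hf₀ (Or.inr (Or.inr (Or.inr
        ⟨x₀, hx₀, a, hx.1 ha, ⟨b, hb, hab⟩, f₀, hf₀', Or.inl ⟨rfl, rfl⟩⟩)))
    have hsub : tagL ⁻¹' z ⊆ x₀ := by
      have hunion := hx₀.1.union hx fun b hb a ha =>
        ⟨fun hba => hnconf a ha b hb (hsymm hba), hnconf a ha b hb⟩
      exact (eq_of_mem_maxC hx₀ hunion Set.subset_union_left).symm ▸ Set.subset_union_right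
    refine ⟨x₀, hx₀, tagC (encSet x₀) ⁻¹' z, hC.preimage_config hz, fun u hu => ?_⟩
    rcases hz.1 hu with ⟨e, -, rfl⟩ | ⟨x', hx', f, -, rfl⟩
    · exact Or.inl ⟨e, hsub hu, rfl⟩
    · have hk := hsame x' hx' f hu
      rw [hk] at hu ⊢
      exact Or.inr ⟨f, hu, rfl⟩
  · push Not at hcopy
    obtain ⟨x₀, hx₀, hsub⟩ := exists_maxC_superset hfin hx
    refine ⟨x₀, hx₀, ∅, config_empty, fun u hu => ?_⟩
    rcases hz.1 hu with ⟨e, -, rfl⟩ | ⟨x', hx', f, -, rfl⟩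
    · exact Or.inl ⟨e, hsub hu, rfl⟩
    · exact (hcopy x' hx' f hu).elim

lemma ES.Invariant.seq (h1 : E1.Invariant Γ1) (h2 : E2.Invariant Γ2) :
    (esSeq E1 E2).Invariant (Γ1 ∪ Γ2) where
  finite := by
    refine (h1.finite.image tagL).union <|
      ((maxC_finite h1.finite).image2 (fun x f => tagC (encSet x) f) h2.finite).subset ?_
    rintro _ ⟨x, hx, f, hf, rfl⟩
    exact Set.mem_image2_of_mem hx hf
  conf_symm := by
    rintro u v (⟨e, he, f, hf, hef, rfl, rfl⟩ | ⟨x, hx, e, he, f, hf, hef, rfl, rfl⟩ |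
      ⟨x, hx, x', hx', hne, e, he, f, hf, rfl, rfl⟩ |
      ⟨x, hx, e, he, hconf, f, hf, ⟨rfl, rfl⟩ | ⟨rfl, rfl⟩⟩)
    · exact Or.inl ⟨f, hf, e, he, h1.conf_symm hef, rfl, rfl⟩
    · exact Or.inr (Or.inl ⟨x, hx, f, hf, e, he, h2.conf_symm hef, rfl, rfl⟩)
    · exact Or.inr (Or.inr (Or.inl ⟨x', hx', x, hx, hne.symm, f, hf, e, he, rfl, rfl⟩))
    · exact Or.inr (Or.inr (Or.inr ⟨x, hx, e, he, hconf, f, hf, Or.inr ⟨rfl, rfl⟩⟩))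
    · exact Or.inr (Or.inr (Or.inr ⟨x, hx, e, he, hconf, f, hf, Or.inl ⟨rfl, rfl⟩⟩))
  sbj_mem := by
    rintro _ (⟨e, he, rfl⟩ | ⟨x, -, f, hf, rfl⟩)
    exacts [by simpa using Or.inl (h1.sbj_mem e he), by simpa using Or.inr (h2.sbj_mem f hf)]
  exists_sbj := by
    rintro A (hA | hA)
    · obtain ⟨e, he, rfl⟩ := h1.exists_sbj A hA
      exact ⟨tagL e, Or.inl ⟨e, he, rfl⟩, by simp⟩
    · obtain ⟨x, hx⟩ := h1.maxC_nonempty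
      obtain ⟨f, hf, rfl⟩ := h2.exists_sbj A hA
      exact ⟨tagC (encSet x) f, Or.inr ⟨x, hx, f, hf, rfl⟩, by simp⟩
  exists_config := by
    rintro _ (⟨e, he, rfl⟩ | ⟨x, hx, f, hf, rfl⟩)
    · obtain ⟨x, hx, hex⟩ := h1.exists_config e he
      exact ⟨_, esSeq_isEmbedding_tagL.image_config esSeq_isLowerRange_tagL hx, e, hex, rfl⟩
    · obtain ⟨y, hy, hfy⟩ := h2.exists_config f hf
      exact ⟨_, esSeq_config_pair (injOn_encSet_maxC h1.finite) hx hy, Or.inr ⟨f, hfy, rfl⟩⟩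
  maxC_sbj := by
    intro z hz A hA
    obtain ⟨x, hx, y, hy, hzxy⟩ := esSeq_config_subset_pair h1.finite h1.conf_symm hz.1
    obtain ⟨y', hy', hyy'⟩ := exists_maxC_superset h2.finite hy
    have hz_eq : z = tagL '' x ∪ tagC (encSet x) '' y' :=
      eq_of_mem_maxC hz (esSeq_config_pair (injOn_encSet_maxC h1.finite) hx hy'.1)
        (hzxy.trans (Set.union_subset_union_right _ (Set.image_mono hyy')))
    rcases hA with hA | hA
    · obtain ⟨e, he, rfl⟩ := h1.maxC_sbj x hx A hA
      exact ⟨tagL e, hz_eq ▸ Or.inl ⟨e, he, rfl⟩, by simp⟩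
    · obtain ⟨f, hf, rfl⟩ := h2.maxC_sbj y' hy' A hA
      exact ⟨tagC (encSet x) f, hz_eq ▸ Or.inr ⟨f, hf, rfl⟩, by simp⟩

lemma esSeq_proj_isLowerRange_tagC (hA : (E1.proj A).ev = ∅) (k : ℕ) :
    IsLowerRange (tagC k) ((esSeq E1 E2).proj A) := by
  rintro u v ⟨hle, ⟨-, huA⟩, -⟩
  rcases hle with ⟨e, -, f, -, -, rfl, h⟩ | ⟨x, -, e, -, f, -, -, rfl, h⟩ |
    ⟨x, hx, e, he, f, -, -, rfl, h⟩
  · simp at h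
  · obtain ⟨hk, -⟩ := tagC_inj.1 h
    exact ⟨e, by rw [hk]⟩
  · exact (hA.subset ⟨hx.1.1 he, by simpa using huA⟩).elim

lemma esSeq_proj_isUpperRange_tagL (hA : (E2.proj A).ev = ∅) :
    IsUpperRange tagL ((esSeq E1 E2).proj A) := by
  rintro u v ⟨hle, -, ⟨-, hvA⟩⟩
  rcases hle with ⟨e, -, f, -, -, h, rfl⟩ | ⟨x, -, e, -, f, -, -, h, rfl⟩ |
    ⟨x, -, e, -, f, hf, -, h, rfl⟩
  · exact ⟨f, rfl⟩
  · simp at h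
  · exact (hA.subset ⟨hf, by simpa using hvA⟩).elim

lemma esSeq_proj_minLbl_of_mem (h1 : E1.Invariant Γ1) (hA : A ∈ Γ1) :
    ((esSeq E1 E2).proj A).minLbl = (E1.proj A).minLbl := by
  refine (esSeq_isEmbedding_tagL.proj A).minLbl_eq (esSeq_isLowerRange_tagL.proj A) ?_
  intro u ⟨⟨hu, huA⟩, hmin⟩
  rcases hu with ⟨e, -, rfl⟩ | ⟨x, hx, f, hf, rfl⟩
  · exact ⟨e, rfl⟩
  obtain ⟨e, hex, heA⟩ := h1.maxC_sbj x hx A hA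
  have hev : tagL e ∈ ((esSeq E1 E2).proj A).ev := ⟨Or.inl ⟨e, hx.1.1 hex, rfl⟩, by simpa⟩
  have hle : (esSeq E1 E2).le (tagL e) (tagC (encSet x) f) :=
    Or.inr (Or.inr ⟨x, hx, e, hex, f, hf, heA.trans (by simpa using huA.symm), rfl, rfl⟩)
  simpa using hmin _ hev ⟨hle, hev, ⟨Or.inr ⟨x, hx, f, hf, rfl⟩, huA⟩⟩

lemma esSeq_proj_minLbl_of_notMem (h1 : E1.Invariant Γ1) (hA : A ∉ Γ1) :
    ((esSeq E1 E2).proj A).minLbl = (E2.proj A).minLbl := by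
  have := h1.maxC_nonempty.to_subtype
  refine minLbl_eq_of_cover (ι := fun x : E1.MaxC => tagC (encSet x.1))
    (fun x => (esSeq_isEmbedding_tagC (injOn_encSet_maxC h1.finite) x.2).proj A)
    (fun x => esSeq_proj_isLowerRange_tagC (h1.proj_ev_eq_empty hA) _) ?_
  rintro _ ⟨⟨⟨e, he, rfl⟩ | ⟨x, hx, f, -, rfl⟩, huA⟩, -⟩
  · simp only [esSeq_lbl_tagL] at huA
    exact (hA (huA ▸ h1.sbj_mem e he)).elim
  · exact Set.mem_iUnion.2 ⟨⟨x, hx⟩, f, rfl⟩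

lemma esSeq_proj_maxLbl_of_notMem (h2 : E2.Invariant Γ2) (hA : A ∉ Γ2) :
    ((esSeq E1 E2).proj A).maxLbl = (E1.proj A).maxLbl := by
  refine (esSeq_isEmbedding_tagL.proj A).dual.minLbl_eq
    (esSeq_proj_isUpperRange_tagL (h2.proj_ev_eq_empty hA)).dual ?_
  rintro _ ⟨⟨⟨e, -, rfl⟩ | ⟨x, -, f, hf, rfl⟩, huA⟩, -⟩
  · exact ⟨e, rfl⟩
  · simp only [esSeq_lbl_tagC] at huA
    exact (hA (huA ▸ h2.sbj_mem f hf)).elim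

lemma esSeq_proj_maxLbl_of_mem (h1 : E1.Invariant Γ1) (h2 : E2.Invariant Γ2) (hA : A ∈ Γ2) :
    ((esSeq E1 E2).proj A).maxLbl = (E2.proj A).maxLbl := by
  have := h1.maxC_nonempty.to_subtype
  refine minLbl_eq_of_cover (ι := fun x : E1.MaxC => tagC (encSet x.1))
    (fun x => ((esSeq_isEmbedding_tagC (injOn_encSet_maxC h1.finite) x.2).proj A).dual)
    (fun x => ((esSeq_isUpperRange_tagC _).proj A).dual) ?_
  rintro u ⟨⟨hu, huA⟩, hmax⟩
  rcases hu with ⟨e, he, rfl⟩ | ⟨x, hx, f, -, rfl⟩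
  · simp only [esSeq_lbl_tagL] at huA
    obtain ⟨x, hx, hex⟩ := h1.exists_maxC he
    obtain ⟨f, hf, hfA⟩ := h2.exists_sbj A hA
    have hev : tagC (encSet x) f ∈ ((esSeq E1 E2).proj A).ev :=
      ⟨Or.inr ⟨x, hx, f, hf, rfl⟩, by simpa⟩
    have hle : (esSeq E1 E2).le (tagL e) (tagC (encSet x) f) :=
      Or.inr (Or.inr ⟨x, hx, e, hex, f, hf, huA.trans hfA.symm, rfl, rfl⟩)
    simpa using hmax _ hev ⟨hle, ⟨Or.inl ⟨e, he, rfl⟩, by simpa⟩, hev⟩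
  · exact Set.mem_iUnion.2 ⟨⟨x, hx⟩, f, rfl⟩

lemma esAct_proj_le_eq (hab : a ≠ b) (A : P) {u v : ℕ} (huv : ((esAct a b m).proj A).le u v) :
    u = v := by
  obtain ⟨hle, ⟨-, huA⟩, ⟨-, hvA⟩⟩ := huv
  rcases hle with ⟨rfl, rfl⟩ | ⟨rfl, rfl⟩ | ⟨rfl, rfl⟩
  · rfl
  · simp only [esAct, Label.sbj, if_pos, one_ne_zero, if_false] at huA hvA
    exact (hab (huA.trans hvA.symm)).elim
  · rfl

lemma esAct_proj_ev_image (A : P) :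
    (esAct a b m).lbl '' ((esAct a b m).proj A).ev = hat {Label.out a b m, Label.inp a b m} A := by
  ext l
  simp only [esAct, ES.proj, hat, Set.mem_image, Set.mem_insert_iff, Set.mem_singleton_iff]
  constructor
  · rintro ⟨_, ⟨rfl | rfl, hA⟩, rfl⟩ <;> simp_all
  · rintro ⟨rfl | rfl, rfl⟩
    exacts [⟨0, by simp⟩, ⟨1, by simp⟩]

lemma esAct_proj_minLbl (hab : a ≠ b) (A : P) :
    ((esAct a b m).proj A).minLbl = hat {Label.out a b m, Label.inp a b m} A := by
  rw [minLbl, minEv_eq_ev fun _ _ => esAct_proj_le_eq hab A]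
  exact esAct_proj_ev_image A

lemma esAct_proj_maxLbl (hab : a ≠ b) (A : P) :
    ((esAct a b m).proj A).maxLbl = hat {Label.out a b m, Label.inp a b m} A := by
  rw [maxLbl, maxEv_eq_ev fun _ _ => esAct_proj_le_eq hab A]
  exact esAct_proj_ev_image A

lemma esAct_invariant (hab : a ≠ b) : (esAct a b m).Invariant {a, b} := by
  have hcfg : (esAct a b m).Config {0, 1} :=
    ⟨subset_rfl, fun _ _ _ hf _ => hf, fun _ _ _ _ h => h⟩
  have hsbj : ∀ A ∈ ({a, b} : Set P), ∃ e ∈ ({0, 1} : Set ℕ), ((esAct a b m).lbl e).sbj = A := by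
    rintro _ (rfl | rfl)
    exacts [⟨0, by simp, by simp [esAct, Label.sbj]⟩, ⟨1, by simp, by simp [esAct, Label.sbj]⟩]
  refine ⟨Set.toFinite ({0, 1} : Set ℕ), fun _ _ h => h, ?_, hsbj, fun e he => ⟨_, hcfg, he⟩,
    fun x hx => ?_⟩
  · rintro _ (rfl | rfl) <;> simp [esAct, Label.sbj]
  · rw [eq_of_mem_maxC hx hcfg hx.1.1]
    exact hsbj

lemma esEmpty_invariant [Nonempty P] [Nonempty M] : (esEmpty (P := P) (M := M)).Invariant ∅ where
  finite := Set.finite_empty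
  conf_symm _ _ h := h
  sbj_mem _ he := he.elim
  exists_sbj _ hA := hA.elim
  exists_config _ he := he.elim
  maxC_sbj _ _ _ hA := hA.elim

end Constructions

section Typing

variable {Γ Γ1 Γ2 : Set P} {φ Λ φ1 φ2 Λ1 Λ2 : Set (Label P M)} {E E1 E2 : ES P M} {A : P}

lemma hat_union (S T : Set (Label P M)) (A : P) : hat (S ∪ T) A = hat S A ∪ hat T A :=
  Set.sep_union

lemma hat_lminus_of_mem (S : Set (Label P M)) (hA : A ∈ Γ) : hat (lminus S Γ) A = ∅ :=
  Set.eq_empty_of_forall_notMem fun _ hl => hl.1.2 (hl.2 ▸ hA)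

lemma hat_lminus_of_notMem (S : Set (Label P M)) (hA : A ∉ Γ) : hat (lminus S Γ) A = hat S A :=
  Set.ext fun _ => ⟨fun hl => ⟨hl.1.1, hl.2⟩, fun hl => ⟨⟨hl.1, hl.2 ▸ hA⟩, hl.2⟩⟩

structure Realizes (Γ : Set P) (φ Λ : Set (Label P M)) (E : ES P M) : Prop where
  invariant : E.Invariant Γ
  hat_min : ∀ A, hat φ A = (E.proj A).minLbl
  hat_max : ∀ A, hat Λ A = (E.proj A).maxLbl

lemma Realizes.hat_min_eq_empty (h : Realizes Γ φ Λ E) (hA : A ∉ Γ) : hat φ A = ∅ := by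
  rw [h.hat_min, minLbl_eq_empty (h.invariant.proj_ev_eq_empty hA)]

lemma Realizes.hat_max_eq_empty (h : Realizes Γ φ Λ E) (hA : A ∉ Γ) : hat Λ A = ∅ := by
  rw [h.hat_max, maxLbl_eq_empty (h.invariant.proj_ev_eq_empty hA)]

lemma realizes_esEmpty [Nonempty P] [Nonempty M] : Realizes ∅ ∅ ∅ (esEmpty (P := P) (M := M)) :=
  have hev A : (esEmpty.proj A).ev = ∅ := esEmpty_invariant.proj_ev_eq_empty (Set.notMem_empty A)
  ⟨esEmpty_invariant, fun A => (Set.sep_empty _).trans (minLbl_eq_empty (hev A)).symm,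
    fun A => (Set.sep_empty _).trans (maxLbl_eq_empty (hev A)).symm⟩

lemma realizes_esAct (hab : a ≠ b) :
    Realizes {a, b} {Label.out a b m, Label.inp a b m} {Label.out a b m, Label.inp a b m}
      (esAct a b m) :=
  ⟨esAct_invariant hab, fun A => (esAct_proj_minLbl hab A).symm,
    fun A => (esAct_proj_maxLbl hab A).symm⟩

lemma Realizes.seq (h1 : Realizes Γ1 φ1 Λ1 E1) (h2 : Realizes Γ2 φ2 Λ2 E2) :
    Realizes (Γ1 ∪ Γ2) (φ1 ∪ lminus φ2 Γ1) (Λ2 ∪ lminus Λ1 Γ2) (esSeq E1 E2) where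
  invariant := h1.invariant.seq h2.invariant
  hat_min A := by
    rw [hat_union]
    by_cases hA : A ∈ Γ1
    · rw [hat_lminus_of_mem _ hA, Set.union_empty, h1.hat_min,
        esSeq_proj_minLbl_of_mem h1.invariant hA]
    · rw [hat_lminus_of_notMem _ hA, h1.hat_min_eq_empty hA, Set.empty_union, h2.hat_min,
        esSeq_proj_minLbl_of_notMem h1.invariant hA]
  hat_max A := by
    rw [hat_union]
    by_cases hA : A ∈ Γ2
    · rw [hat_lminus_of_mem _ hA, Set.union_empty, h2.hat_max,
        esSeq_proj_maxLbl_of_mem h1.invariant h2.invariant hA]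
    · rw [hat_lminus_of_notMem _ hA, h2.hat_max_eq_empty hA, Set.empty_union, h1.hat_max,
        esSeq_proj_maxLbl_of_notMem h2.invariant hA]

lemma Realizes.tensor (h1 : Realizes Γ1 φ1 Λ1 E1) (h2 : Realizes Γ2 φ2 Λ2 E2) :
    Realizes (Γ1 ∪ Γ2) (φ1 ∪ φ2) (Λ1 ∪ Λ2) (esTensor E1 E2) where
  invariant := h1.invariant.tensor h2.invariant
  hat_min A := by rw [hat_union, h1.hat_min, h2.hat_min, esTensor_proj_minLbl]
  hat_max A := by rw [hat_union, h1.hat_max, h2.hat_max, esTensor_proj_maxLbl]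

lemma Realizes.sum (h1 : Realizes Γ φ1 Λ1 E1) (h2 : Realizes Γ φ2 Λ2 E2) :
    Realizes Γ (φ1 ∪ φ2) (Λ1 ∪ Λ2) (esSum E1 E2) where
  invariant := h1.invariant.sum h2.invariant
  hat_min := (h1.tensor h2).hat_min
  hat_max := (h1.tensor h2).hat_max

lemma Realizes.wb (h1 : Realizes Γ φ1 Λ1 E1) (h2 : Realizes Γ φ2 Λ2 E2)
    (hc : compch φ1 φ2 Γ) : wb E1 E2 := by
  have e1 : minLblP E1 = hat φ1 := funext fun A => (h1.hat_min A).symm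
  have e2 : minLblP E2 = hat φ2 := funext fun A => (h2.hat_min A).symm
  obtain ⟨A, -, ⟨⟨hdisj, hout⟩, hne1, hne2⟩, huniq, hpass⟩ := hc
  refine ⟨A, ?_, fun A' hA' => ?_, fun B hB => ?_⟩
  · rw [active, e1, e2]
    exact ⟨hne1, hne2, hdisj, hout⟩
  · rw [active, e1, e2] at hA'
    obtain ⟨hne1', hne2', hdisj', hout'⟩ := hA'
    have hA'Γ : A' ∈ Γ := by_contra fun hA'Γ => hne1' (h1.hat_min_eq_empty hA'Γ)
    exact huniq A' hA'Γ ⟨⟨hdisj', hout'⟩, hne1', hne2'⟩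
  · rw [passive, e1, e2]
    by_cases hBΓ : B ∈ Γ
    · obtain ⟨⟨hdisj, hin⟩, hiff⟩ := hpass B hBΓ hB
      exact ⟨hdisj, hin, hiff⟩
    · rw [h1.hat_min_eq_empty hBΓ, h2.hat_min_eq_empty hBΓ]
      simp

theorem Typing.realizes [Nonempty P] [Nonempty M] {G : GC P M} (h : Typing Γ G φ Λ) :
    ∃ E, gsem G = some E ∧ Γ = parts G ∧ Realizes Γ φ Λ E := by
  induction h with
  | temp => exact ⟨esEmpty, rfl, rfl, realizes_esEmpty⟩
  | tint hab => exact ⟨_, by simp [gsem, hab], rfl, realizes_esAct hab⟩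
  | tseq _ _ ih1 ih2 =>
    obtain ⟨E1, hE1, rfl, h1⟩ := ih1
    obtain ⟨E2, hE2, rfl, h2⟩ := ih2
    exact ⟨esSeq E1 E2, by simp [gsem, hE1, hE2], rfl, h1.seq h2⟩
  | tpar _ _ hΓ ih1 ih2 =>
    obtain ⟨E1, hE1, rfl, h1⟩ := ih1
    obtain ⟨E2, hE2, rfl, h2⟩ := ih2
    refine ⟨esTensor E1 E2, ?_, rfl, h1.tensor h2⟩
    simp [gsem, hE1, hE2, h1.invariant.disjoint_lblSet h2.invariant hΓ]
  | tch _ _ hc ih1 ih2 =>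
    obtain ⟨E1, hE1, rfl, h1⟩ := ih1
    obtain ⟨E2, hE2, hΓ, h2⟩ := ih2
    refine ⟨esSum E1 E2, by simp [gsem, hE1, hE2, h1.wb h2 hc], ?_, h1.sum h2⟩
    rw [parts, ← hΓ, Set.union_self]

end Typing

/-- **Soundness** (Theorem 1): if `Π ⊢ G : ⟨φ,Λ⟩` is derivable then `⟦G⟧ ≠ ⊥`,
`Π = P(G)`, and for all `A ∈ Π`, `φ̂(A) = min(⟦G⟧↾A)` and `Λ̂(A) = max(⟦G⟧↾A)`
(minimal/maximal events identified with their labels). -/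
theorem soundness {P M : Type} [Infinite P] [Infinite M]
    {Γ : Set P} {G : GC P M} {φ Λ : Set (Label P M)}
    (h : Typing Γ G φ Λ) :
    gsem G ≠ none ∧
    ∃ E : ES P M, gsem G = some E ∧ Γ = parts G ∧
      ∀ A ∈ Γ, hat φ A = (E.proj A).minLbl ∧ hat Λ A = (E.proj A).maxLbl := by
  obtain ⟨E, hE, hΓ, hreal⟩ := h.realizes
  exact ⟨by simp [hE], E, hE, hΓ, fun A _ => ⟨hreal.hat_min A, hreal.hat_max A⟩⟩

end Choreo
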